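/- arXiv:1505.07722 — 3 statements merged into one kernel-verified Lean document; each statement's English description precedes it below -/
import Mathlib

section
/- For fixed total length L ≥ 2 and α ∈ (0,1), the function Δ ↦ g(Δ) + g(L-Δ), where g(Δ) = ∑_{δ=1}^{Δ}(1-α^δ), is minimized over integers 1 ≤ Δ ≤ L-1 when Δ ∈ {⌊L/2⌋, ⌈L/2⌉}; i.e., with one intermediate visit between two fixed visits L periods apart, equally spacing the visits minimizes the aggregate uncontrolled probability. -/
/-- Aggregate uncontrolled probability of an arc of length `Δ`. -/
noncomputable def arcCost (α : ℝ) (Δ : ℕ) : ℝ := ∑ δ ∈ Finset.Icc 1 Δ, (1 - α ^ δ)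

lemma arcCost_succ (α : ℝ) (n : ℕ) :
    arcCost α (n + 1) = arcCost α n + (1 - α ^ (n + 1)) := by
  unfold arcCost
  rw [Finset.sum_Icc_succ_top (by omega)]

lemma step_le (α : ℝ) (h0 : 0 < α) (h1 : α < 1) (L Δ : ℕ) (hΔ : 2 * Δ + 2 ≤ L) :
    arcCost α (Δ + 1) + arcCost α (L - (Δ + 1)) ≤ arcCost α Δ + arcCost α (L - Δ) := by
  have hLΔ : L - Δ = (L - (Δ + 1)) + 1 := by omega
  rw [hLΔ, arcCost_succ, arcCost_succ]
  have hpow : α ^ (L - (Δ + 1) + 1) ≤ α ^ (Δ + 1) :=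
    pow_le_pow_of_le_one h0.le h1.le (by omega)
  linarith

lemma aux (α : ℝ) (h0 : 0 < α) (h1 : α < 1) (L : ℕ) :
    ∀ k Δ : ℕ, Δ + k = L / 2 →
      arcCost α (L / 2) + arcCost α (L - L / 2) ≤ arcCost α Δ + arcCost α (L - Δ) := by
  intro k
  induction k with
  | zero => intro Δ h; simp at h; rw [h]
  | succ n ih =>
      intro Δ h
      have h2 : 2 * Δ + 2 ≤ L := by omega
      calc arcCost α (L / 2) + arcCost α (L - L / 2)
          ≤ arcCost α (Δ + 1) + arcCost α (L - (Δ + 1)) := ih (Δ + 1) (by omega)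
        _ ≤ arcCost α Δ + arcCost α (L - Δ) := step_le α h0 h1 L Δ h2

theorem equal_spacing_minimizes (α : ℝ) (h0 : 0 < α) (h1 : α < 1) (L : ℕ) (hL : 2 ≤ L) :
    (∀ Δ : ℕ, 1 ≤ Δ → Δ ≤ L - 1 →
      arcCost α (L / 2) + arcCost α (L - L / 2) ≤ arcCost α Δ + arcCost α (L - Δ)) ∧
    arcCost α ((L + 1) / 2) + arcCost α (L - (L + 1) / 2)
      = arcCost α (L / 2) + arcCost α (L - L / 2) := by
  constructor
  · intro Δ h1' h2'
    by_cases hc : Δ ≤ L / 2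
    · exact aux α h0 h1 L (L / 2 - Δ) Δ (by omega)
    · have hsym : arcCost α Δ + arcCost α (L - Δ)
          = arcCost α (L - Δ) + arcCost α (L - (L - Δ)) := by
        have : L - (L - Δ) = Δ := by omega
        rw [this]; ring
      rw [hsym]
      exact aux α h0 h1 L (L / 2 - (L - Δ)) (L - Δ) (by omega)
  · have e1 : L - (L + 1) / 2 = L / 2 := by omega
    have e2 : L - L / 2 = (L + 1) / 2 := by omega
    rw [e1, e2]; ring
end

section
/- For a single patient, monotonicity in no-show probability: if two schedules use the same time slots but the per-period no-show probabilities satisfy n_k ≤ n'_k for all k, then the resulting time-since-last-visit distributions satisfy first-order stochastic dominance: ∑_{l=0}^{m} P^{k,l} ≥ ∑_{l=0}^{m} P'^{k,l} for all k and m, and consequently E[U^k] ≤ E[U'^k] for all k and any α ∈ [0,1]. -/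
/-- Time-since-last-visit distribution: `tslv n k l` is the probability that
the time since the last visit equals `l` immediately after period `k`,
given no-show probabilities `n`. -/
noncomputable def tslv (n : ℕ → ℝ) : ℕ → ℕ → ℝ
  | 0, 0 => 1
  | 0, _ + 1 => 0
  | k + 1, 0 => 1 - n (k + 1)
  | k + 1, l + 1 => n (k + 1) * tslv n k l

/-- Expected aggregate probability of being uncontrolled through period `k`. -/
noncomputable def EU (n : ℕ → ℝ) (α : ℝ) : ℕ → ℝ
  | 0 => 1 - α
  | k + 1 => EU n α k + ∑ l ∈ Finset.range (k + 2), tslv n (k + 1) l * (1 - α ^ (l + 1))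

lemma tslv_sum_zero (n : ℕ → ℝ) : ∀ m, ∑ l ∈ Finset.range (m + 1), tslv n 0 l = 1 := by
  intro m
  induction m with
  | zero => simp [tslv]
  | succ m ih => rw [Finset.sum_range_succ, ih]; simp [tslv]

lemma tslv_sum_rec (n : ℕ → ℝ) (k m : ℕ) :
    ∑ l ∈ Finset.range (m + 2), tslv n (k + 1) l
      = (1 - n (k + 1)) + n (k + 1) * ∑ l ∈ Finset.range (m + 1), tslv n k l := by
  rw [Finset.sum_range_succ']
  simp only [tslv, Finset.mul_sum]
  ring

lemma tslv_sum_le_one (n : ℕ → ℝ) (hn : ∀ k, 0 ≤ n k ∧ n k ≤ 1) :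
    ∀ k m, ∑ l ∈ Finset.range (m + 1), tslv n k l ≤ 1 := by
  intro k
  induction k with
  | zero => intro m; rw [tslv_sum_zero]
  | succ k ih =>
    intro m
    cases m with
    | zero => simp [tslv]; exact (hn (k+1)).1
    | succ m =>
      rw [tslv_sum_rec]
      nlinarith [(hn (k+1)).1, (hn (k+1)).2, ih m]

lemma tslv_sum_eq_one (n : ℕ → ℝ) : ∀ k, ∑ l ∈ Finset.range (k + 1), tslv n k l = 1 := by
  intro k
  induction k with
  | zero => simp [tslv]
  | succ k ih => rw [tslv_sum_rec, ih]; ring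

lemma tslv_fosd (n n' : ℕ → ℝ)
    (hn : ∀ k, 0 ≤ n k ∧ n k ≤ 1) (hn' : ∀ k, 0 ≤ n' k ∧ n' k ≤ 1)
    (hle : ∀ k, n k ≤ n' k) :
    ∀ k m, ∑ l ∈ Finset.range (m + 1), tslv n' k l
        ≤ ∑ l ∈ Finset.range (m + 1), tslv n k l := by
  intro k
  induction k with
  | zero => intro m; rw [tslv_sum_zero, tslv_sum_zero]
  | succ k ih =>
    intro m
    cases m with
    | zero =>
      rw [Finset.sum_range_one, Finset.sum_range_one]
      show 1 - n' (k+1) ≤ 1 - n (k+1)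
      linarith [hle (k+1)]
    | succ m =>
      rw [tslv_sum_rec, tslv_sum_rec]
      have h1 := tslv_sum_le_one n hn k m
      have h2 := tslv_sum_le_one n' hn' k m
      have h3 := ih m
      have h4 := hle (k + 1)
      have h5 := (hn (k+1)).1
      have h6 := (hn' (k+1)).1
      nlinarith

theorem monotone_in_noshow (n n' : ℕ → ℝ)
    (hn : ∀ k, 0 ≤ n k ∧ n k ≤ 1) (hn' : ∀ k, 0 ≤ n' k ∧ n' k ≤ 1)
    (hle : ∀ k, n k ≤ n' k) :
    (∀ k m, ∑ l ∈ Finset.range (m + 1), tslv n' k l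
        ≤ ∑ l ∈ Finset.range (m + 1), tslv n k l) ∧
    (∀ α : ℝ, 0 ≤ α → α ≤ 1 → ∀ k, EU n α k ≤ EU n' α k) := by
  refine ⟨tslv_fosd n n' hn hn' hle, ?_⟩
  intro α hα0 hα1 k
  induction k with
  | zero => simp [EU]
  | succ k ih =>
    have key : ∀ (nn : ℕ → ℝ),
        ∑ l ∈ Finset.range (k + 2), tslv nn (k + 1) l * (1 - α ^ (l + 1))
          = (1 - α ^ (k + 2))
            - ∑ i ∈ Finset.range (k + 1),
                (α ^ (i + 1) - α ^ (i + 2)) * ∑ j ∈ Finset.range (i + 1), tslv nn (k + 1) j := by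
      intro nn
      have := Finset.sum_range_by_parts (fun i => 1 - α ^ (i + 1))
        (fun i => tslv nn (k + 1) i) (k + 2)
      simp only [smul_eq_mul] at this
      have hcomm : ∑ l ∈ Finset.range (k + 2), tslv nn (k + 1) l * (1 - α ^ (l + 1))
          = ∑ l ∈ Finset.range (k + 2), (1 - α ^ (l + 1)) * tslv nn (k + 1) l := by
        refine Finset.sum_congr rfl fun _ _ => mul_comm _ _
      rw [hcomm, this]
      norm_num
      rw [tslv_sum_eq_one nn (k + 1)]
      ring_nf
    rw [EU, EU, key n, key n']
    have hsum : ∑ i ∈ Finset.range (k + 1),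
          (α ^ (i + 1) - α ^ (i + 2)) * ∑ j ∈ Finset.range (i + 1), tslv n' (k + 1) j
        ≤ ∑ i ∈ Finset.range (k + 1),
          (α ^ (i + 1) - α ^ (i + 2)) * ∑ j ∈ Finset.range (i + 1), tslv n (k + 1) j := by
      refine Finset.sum_le_sum fun i _ => ?_
      have hc : 0 ≤ α ^ (i + 1) - α ^ (i + 2) := by
        have : α ^ (i + 2) ≤ α ^ (i + 1) := pow_le_pow_of_le_one hα0 hα1 (by omega)
        linarith
      exact mul_le_mul_of_nonneg_left (tslv_fosd n n' hn hn' hle (k + 1) i) hc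
    linarith
end

section
/- Adding a visit never hurts: if schedule S' is obtained from schedule S by changing one period's no-show probability from 1 (no appointment) to some n ∈ [0,1), then E[U^K] under S' is at most E[U^K] under S. -/
noncomputable def W (n : ℕ → ℝ) (α : ℝ) (k : ℕ) : ℝ :=
  ∑ l ∈ Finset.range (k + 1), tslv n k l * (1 - α ^ (l + 1))

lemma tslv_sum (n : ℕ → ℝ) (k : ℕ) :
    ∑ l ∈ Finset.range (k + 1), tslv n k l = 1 := by
  induction k with
  | zero => simp [tslv]
  | succ k ih =>
      rw [Finset.sum_range_succ' _ (k + 1)]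
      have : ∑ i ∈ Finset.range (k + 1), tslv n (k + 1) (i + 1)
          = n (k + 1) * ∑ i ∈ Finset.range (k + 1), tslv n k i := by
        rw [Finset.mul_sum]
        exact Finset.sum_congr rfl fun i _ => rfl
      rw [this, ih]
      show n (k + 1) * 1 + (1 - n (k + 1)) = 1
      ring

lemma W_rec (n : ℕ → ℝ) (α : ℝ) (k : ℕ) :
    W n α (k + 1) = (1 - α) + α * n (k + 1) * W n α k := by
  unfold W
  rw [Finset.sum_range_succ' _ (k + 1)]
  have h1 : ∑ i ∈ Finset.range (k + 1), tslv n (k + 1) (i + 1) * (1 - α ^ (i + 1 + 1))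
      = n (k + 1) * (1 - α) * (∑ i ∈ Finset.range (k + 1), tslv n k i)
        + α * n (k + 1) * ∑ i ∈ Finset.range (k + 1), tslv n k i * (1 - α ^ (i + 1)) := by
    rw [Finset.mul_sum, Finset.mul_sum, ← Finset.sum_add_distrib]
    refine Finset.sum_congr rfl fun i _ => ?_
    show n (k + 1) * tslv n k i * (1 - α ^ (i + 1 + 1)) = _
    ring
  rw [h1, tslv_sum]
  show _ + (1 - n (k + 1)) * (1 - α ^ (0 + 1)) = _
  ring

lemma W_nonneg (n : ℕ → ℝ) (hn : ∀ k, 0 ≤ n k) (α : ℝ) (hα0 : 0 ≤ α) (hα1 : α ≤ 1)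
    (k : ℕ) : 0 ≤ W n α k := by
  induction k with
  | zero =>
      have : W n α 0 = 1 - α := by simp [W, tslv]
      linarith
  | succ k ih =>
      rw [W_rec]
      have h1 := mul_nonneg (mul_nonneg hα0 (hn (k + 1))) ih
      linarith

lemma W_mono (n n' : ℕ → ℝ) (hn' : ∀ k, 0 ≤ n' k) (hle : ∀ k, n' k ≤ n k)
    (α : ℝ) (hα0 : 0 ≤ α) (hα1 : α ≤ 1) (k : ℕ) : W n' α k ≤ W n α k := by
  induction k with
  | zero =>
      have h1 : W n α 0 = 1 - α := by simp [W, tslv]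
      have h2 : W n' α 0 = 1 - α := by simp [W, tslv]
      rw [h1, h2]
  | succ k ih =>
      rw [W_rec, W_rec]
      have h0 := W_nonneg n' hn' α hα0 hα1 k
      have h1 : 0 ≤ n (k + 1) := le_trans (hn' (k + 1)) (hle (k + 1))
      have h2 : n' (k + 1) * W n' α k ≤ n (k + 1) * W n α k :=
        mul_le_mul (hle (k + 1)) ih h0 h1
      have h3 := mul_le_mul_of_nonneg_left h2 hα0
      linarith [mul_assoc α (n (k + 1)) (W n α k), mul_assoc α (n' (k + 1)) (W n' α k)]

theorem adding_visit_never_hurts (n n' : ℕ → ℝ) (hn : ∀ k, 0 ≤ n k ∧ n k ≤ 1)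
    (k₀ : ℕ) (ν : ℝ) (hν0 : 0 ≤ ν) (hν1 : ν < 1)
    (hk₀ : n k₀ = 1) (hn'k₀ : n' k₀ = ν) (hsame : ∀ k, k ≠ k₀ → n' k = n k)
    (α : ℝ) (hα0 : 0 ≤ α) (hα1 : α ≤ 1) (K : ℕ) :
    EU n' α K ≤ EU n α K := by
  have hn'0 : ∀ k, 0 ≤ n' k := by
    intro k
    by_cases h : k = k₀
    · rw [h, hn'k₀]; exact hν0
    · rw [hsame k h]; exact (hn k).1
  have hle : ∀ k, n' k ≤ n k := by
    intro k
    by_cases h : k = k₀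
    · rw [h, hn'k₀, hk₀]; linarith
    · rw [hsame k h]
  induction K with
  | zero => exact le_refl _
  | succ K ih =>
      show EU n' α K + W n' α (K + 1) ≤ EU n α K + W n α (K + 1)
      exact add_le_add ih (W_mono n n' hn'0 hle α hα0 hα1 (K + 1))
end
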